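/- arXiv:1508.05752 — 2 statements merged into one kernel-verified Lean document; each statement's English description precedes it below -/
import Mathlib

section
/- For every radius r ≥ 0, the set 𝒜_r of generalized global CA rules expressible by a local rule of radius r is strictly contained in 𝒜_{r+1}. -/
/-
A radius-`r` rule is a radius-`s` rule for every `s ≥ r` that ignores the outer cells, so the
classes increase. The shift `x ↦ (i ↦ x (i - (r + 1)))` has radius `r + 1`, but not radius `r`:
on a ring of `2r + 2` cells the configurations `0` and `δ_{-(r+1)}` agree on the radius-`r`
window at `0`, yet their shifts differ there.
-/

/-- A local rule of radius `r` on states `{0,1}` (modelled as `Bool`). -/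
def LocalRule (r : ℕ) := (Fin (2*r+1) → Bool) → Bool

/-- The global CA map of width `M` induced by the local rule `f` of radius `r`,
with periodic boundary conditions (cells indexed by `ZMod M`). -/
def globalMap (r : ℕ) (f : LocalRule r) (M : ℕ) (x : ZMod M → Bool) : ZMod M → Bool :=
  fun i => f (fun j => x (i + ((((j : ℕ) : ℤ) - (r : ℤ) : ℤ) : ZMod M)))

/-- A generalized global rule: a map on configurations of every finite width. -/
def GenRule := (M : ℕ) → (ZMod M → Bool) → (ZMod M → Bool)

/-- `A` is the generalized global CA rule of radius `r` induced by some local rule. -/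
def IsCA (A : GenRule) (r : ℕ) : Prop := ∃ f : LocalRule r, ∀ M, A M = globalMap r f M

/-- An observation: an `N × M` array over `{0,1,?}` (modelled as `Option Bool`,
`none` = `?`), whose first row is completely observed. -/
structure Obs where
  M : ℕ
  hM : 0 < M
  N : ℕ
  hN : 0 < N
  data : ℕ → ZMod M → Option Bool
  first : ∀ m, data 0 m ≠ none

/-- `I'` is a (spatially complete) completion of the observation `I`,
i.e. `I' ∈ com(I)`. -/
def Completes (I : Obs) (I' : ℕ → ZMod I.M → Bool) : Prop :=
  ∀ n < I.N, ∀ m b, I.data n m = some b → I' n m = b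

/-- The rule `A` fits the observation `I`. -/
def Fits (A : GenRule) (I : Obs) : Prop :=
  ∃ I' : ℕ → ZMod I.M → Bool, Completes I I' ∧
    ∃ τ : ℕ → ℕ, StrictMono τ ∧ τ 0 = 0 ∧ ∀ n < I.N, (A I.M)^[τ n] (I' 0) = I' n

/-- `𝒜_r`: the set of generalized global CA rules expressible by a local rule
of radius `r`. -/
def ruleClass (r : ℕ) : Set GenRule := {A | IsCA A r}

def LocalRule.extend {r s : ℕ} (f : LocalRule r) (h : r ≤ s) : LocalRule s :=
  fun g => f fun j => g ⟨j + (s - r), by omega⟩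

theorem globalMap_extend {r s : ℕ} (f : LocalRule r) (h : r ≤ s) (M : ℕ) :
    globalMap s (f.extend h) M = globalMap r f M := by
  funext x i
  simp only [globalMap, LocalRule.extend]
  congr 2 with j
  congr 2
  push_cast [Nat.cast_sub h]
  ring

theorem ruleClass_mono : Monotone ruleClass := by
  rintro r s h A ⟨f, hf⟩
  exact ⟨f.extend h, fun M => (hf M).trans (globalMap_extend f h M).symm⟩

theorem globalMap_congr {r M : ℕ} (f : LocalRule r) {x y : ZMod M → Bool} (i : ZMod M)
    (hxy : ∀ j : Fin (2 * r + 1), x (i + (((j : ℕ) : ℤ) - r : ℤ)) = y (i + (((j : ℕ) : ℤ) - r : ℤ))) :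
    globalMap r f M x i = globalMap r f M y i :=
  congrArg f (funext hxy)

def shiftRule (k : ℕ) : GenRule := fun _ x i => x (i - k)

theorem shiftRule_mem_ruleClass (k : ℕ) : shiftRule k ∈ ruleClass k :=
  ⟨fun g => g 0, fun M => by
    funext x i
    simp [shiftRule, globalMap, sub_eq_add_neg]⟩

theorem window_offset_ne_neg {r k : ℕ} (hrk : r < k) (j : Fin (2 * r + 1)) :
    ((((j : ℕ) : ℤ) - r : ℤ) : ZMod (k + r + 1)) ≠ -(k : ZMod (k + r + 1)) := by
  intro h
  have hdvd : ((k + r + 1 : ℕ) : ℤ) ∣ ((j : ℕ) : ℤ) - r + k := by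
    rw [← ZMod.intCast_zmod_eq_zero_iff_dvd]
    push_cast at h ⊢
    rw [h, neg_add_cancel]
  have hj := j.isLt
  -- `j - r + k` lies strictly between `0` and `k + r + 1`
  have := Int.eq_zero_of_dvd_of_nonneg_of_lt (by omega) (by push_cast; omega) hdvd
  omega

theorem shiftRule_not_mem_ruleClass {r k : ℕ} (hrk : r < k) : shiftRule k ∉ ruleClass r := by
  rintro ⟨f, hf⟩
  set M := k + r + 1
  let x : ZMod M → Bool := fun _ => false
  let y : ZMod M → Bool := fun m => decide (m = -k)
  have hwindow : globalMap r f M x 0 = globalMap r f M y 0 :=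
    globalMap_congr f 0 fun j => by
      simp only [x, y, zero_add]
      exact (decide_eq_false (window_offset_ne_neg hrk j)).symm
  rw [← hf M] at hwindow
  simp [shiftRule, x, y] at hwindow

/-- For every radius `r ≥ 0`, `𝒜_r ⊊ 𝒜_{r+1}`. -/
theorem stmt1 (r : ℕ) : ruleClass r ⊂ ruleClass (r+1) :=
  (Set.ssubset_iff_of_subset (ruleClass_mono r.le_succ)).2
    ⟨shiftRule (r + 1), shiftRule_mem_ruleClass (r + 1), shiftRule_not_mem_ruleClass r.lt_succ_self⟩
end

section
/- Let A be a CA rule and ℐ an observation set. There exists a strictly increasing sequence (τ^I_i) of positive naturals with E_ℐ(A, (τ^I_i)) = 0 if and only if there exists a sequence (t^I_i) of positive naturals with Ẽ_ℐ(A, (t^I_i)) = 0, where Ẽ_ℐ(A,(t^I_i)) = Σ_{I∈ℐ} Σ_{n=1}^{N_I−1} dist(A^{t^I_n}(Ī^A_{(t^I_i)}[n]), Ī^A_{(t^I_i)}[n+1]). -/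
/-- Distance between two entries of `{0,1,?}`: counts a mismatch only when
both entries are observed. -/
def odist (a b : Option Bool) : ℕ :=
  match a, b with
  | some x, some y => if x = y then 0 else 1
  | _, _ => 0

/-- `dist(a,b) = Σ_{i : aᵢ,bᵢ ∈ {0,1}} |aᵢ - bᵢ|` for rows of width `M`. -/
def vdist {M : ℕ} (hM : 0 < M) (a b : ZMod M → Option Bool) : ℕ :=
  haveI : NeZero M := ⟨hM.ne'⟩
  ∑ m : ZMod M, odist (a m) (b m)

/-- The first (completely observed) row of an observation, as a `{0,1}`-row. -/
def row0 (I : Obs) : ZMod I.M → Bool := fun m => (I.data 0 m).getD false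

/-- The error measure `E_I(A,(τᵢ)) = Σ_{n=1}^{N-1} dist(A^{τₙ}(I[1]), I[n+1])`. -/
def Emeasure (A : GenRule) (I : Obs) (τ : ℕ → ℕ) : ℕ :=
  ∑ n ∈ Finset.range (I.N - 1),
    vdist I.hM (fun m => some ((A I.M)^[τ (n+1)] (row0 I) m)) (I.data (n+1))

/-- The `A`-completion `Ī^A_{(tᵢ)}` of `I` with time gaps `(tᵢ)`. -/
def completion (A : GenRule) (I : Obs) (t : ℕ → ℕ) : ℕ → ZMod I.M → Bool
  | 0, m => (I.data 0 m).getD false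
  | n+1, m => (I.data (n+1) m).getD ((A I.M)^[t n] (fun m' => completion A I t n m') m)

/-- The error measure `Ẽ_I(A,(tᵢ))`, computed on the `A`-completion of `I`. -/
def Etilde (A : GenRule) (I : Obs) (t : ℕ → ℕ) : ℕ :=
  ∑ n ∈ Finset.range (I.N - 1),
    vdist I.hM (fun m => some ((A I.M)^[t n] (completion A I t n) m))
      (fun m => some (completion A I t (n+1) m))

/-! Write `t n = τ (n + 1) - τ n`, so that `τ n = ∑ i < n, t i`. Both error measures vanish
exactly when the rows of the `A`-completion up to row `N` lie on the orbit `n ↦ A^[τ n] (I[1])`: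
for `Ẽ` because it compares each completed row with `A^[t n]` of the previous one, for `E`
because the completion fills the unobserved entries of a row from the previous row, so it stays on
the orbit precisely when the observed entries agree with it. -/

open Finset

theorem Option.getD_eq_self_iff {α : Type*} {o : Option α} {a : α} :
    o.getD a = a ↔ ∀ b, o = some b → a = b := by
  cases o <;> simp [eq_comm]

theorem odist_some_eq_zero_iff {x : Bool} {o : Option Bool} :
    odist (some x) o = 0 ↔ ∀ b, o = some b → x = b := by
  rcases o with _ | y
  · simp [odist]
  · cases x <;> cases y <;> simp [odist]

theorem vdist_eq_zero_iff {M : ℕ} (hM : 0 < M) {a b : ZMod M → Option Bool} :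
    vdist hM a b = 0 ↔ ∀ m, odist (a m) (b m) = 0 := by
  have : NeZero M := ⟨hM.ne'⟩
  simp [vdist, sum_eq_zero_iff]

theorem forall_iterate_eq_iff_eq_iterate_sum {X : Type*} (F : X → X) (t : ℕ → ℕ) (c : ℕ → X)
    (K : ℕ) :
    (∀ n < K, F^[t n] (c n) = c (n + 1)) ↔ ∀ n < K + 1, c n = F^[∑ i ∈ range n, t i] (c 0) := by
  induction K with
  | zero => simp
  | succ K ih =>
    rw [Nat.forall_lt_succ_right, Nat.forall_lt_succ_right (n := K + 1), ih]
    refine and_congr_right fun horbit => ?_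
    rw [horbit K K.lt_succ_self, ← Function.iterate_add_apply, sum_range_succ, add_comm, eq_comm]

theorem Emeasure_eq_zero_iff (A : GenRule) (I : Obs) (τ : ℕ → ℕ) :
    Emeasure A I τ = 0 ↔
      ∀ n < I.N - 1, ∀ m b, I.data (n + 1) m = some b → (A I.M)^[τ (n + 1)] (row0 I) m = b := by
  simp only [Emeasure, sum_eq_zero_iff, mem_range, vdist_eq_zero_iff, odist_some_eq_zero_iff]

theorem Etilde_eq_zero_iff (A : GenRule) (I : Obs) (t : ℕ → ℕ) :
    Etilde A I t = 0 ↔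
      ∀ n < I.N - 1, (A I.M)^[t n] (completion A I t n) = completion A I t (n + 1) := by
  simp only [Etilde, sum_eq_zero_iff, mem_range, vdist_eq_zero_iff, odist_some_eq_zero_iff,
    Option.some_inj, forall_eq', funext_iff]

theorem completion_zero (A : GenRule) (I : Obs) (t : ℕ → ℕ) : completion A I t 0 = row0 I :=
  rfl

theorem forall_data_consistent_iff_completion_eq_iterate (A : GenRule) (I : Obs) (t : ℕ → ℕ)
    (K : ℕ) :
    (∀ n < K, ∀ m b, I.data (n + 1) m = some b →
        (A I.M)^[∑ i ∈ range (n + 1), t i] (row0 I) m = b) ↔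
      ∀ n < K + 1, completion A I t n = (A I.M)^[∑ i ∈ range n, t i] (row0 I) := by
  induction K with
  | zero => simp [completion_zero]
  | succ K ih =>
    rw [Nat.forall_lt_succ_right, Nat.forall_lt_succ_right (n := K + 1), ih]
    refine and_congr_right fun horbit => ?_
    have hstep : completion A I t (K + 1) = fun m =>
        (I.data (K + 1) m).getD ((A I.M)^[∑ i ∈ range (K + 1), t i] (row0 I) m) := by
      funext m
      rw [completion, horbit K K.lt_succ_self, sum_range_succ, add_comm _ (t K),
        Function.iterate_add_apply]
    simp only [hstep, funext_iff, Option.getD_eq_self_iff]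

theorem Etilde_eq_zero_iff_Emeasure_eq_zero (A : GenRule) (I : Obs) (t : ℕ → ℕ) :
    Etilde A I t = 0 ↔ Emeasure A I (fun n => ∑ i ∈ range n, t i) = 0 := by
  rw [Etilde_eq_zero_iff, forall_iterate_eq_iff_eq_iterate_sum, Emeasure_eq_zero_iff,
    forall_data_consistent_iff_completion_eq_iterate, completion_zero]

theorem stmt8_general (𝓘 : Finset Obs) (A : GenRule) :
    (∃ τ : Obs → ℕ → ℕ,
      (∀ I ∈ 𝓘, StrictMono (τ I) ∧ τ I 0 = 0) ∧
      ∑ I ∈ 𝓘, Emeasure A I (τ I) = 0) ↔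
    (∃ t : Obs → ℕ → ℕ,
      (∀ I ∈ 𝓘, ∀ n, 1 ≤ t I n) ∧
      ∑ I ∈ 𝓘, Etilde A I (t I) = 0) := by
  simp only [sum_eq_zero_iff]
  constructor
  · rintro ⟨τ, hτ, hE⟩
    refine ⟨fun I n => τ I (n + 1) - τ I n,
      fun I hI n => Nat.sub_pos_of_lt ((hτ I hI).1 n.lt_succ_self), fun I hI => ?_⟩
    have hsum : (fun n => ∑ i ∈ range n, (τ I (i + 1) - τ I i)) = τ I := by
      funext n
      rw [sum_range_tsub (hτ I hI).1.monotone, (hτ I hI).2, Nat.sub_zero]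
    rw [Etilde_eq_zero_iff_Emeasure_eq_zero, hsum]
    exact hE I hI
  · rintro ⟨t, ht, hE⟩
    refine ⟨fun I n => ∑ i ∈ range n, t I i, fun I hI => ⟨?_, sum_range_zero _⟩,
      fun I hI => (Etilde_eq_zero_iff_Emeasure_eq_zero A I (t I)).1 (hE I hI)⟩
    refine strictMono_nat_of_lt_succ fun n => ?_
    simp only [sum_range_succ]
    exact Nat.lt_add_of_pos_right (ht I hI n)

/-- There is a family of strictly increasing sequences of positive times
`(τ^I)` with `E_ℐ(A,(τ^I)) = 0` iff there is a family of sequences of positive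
time gaps `(t^I)` with `Ẽ_ℐ(A,(t^I)) = 0`. -/
theorem stmt8 (𝓘 : Finset Obs) (A : GenRule) (hA : ∃ r, IsCA A r) :
    (∃ τ : Obs → ℕ → ℕ,
      (∀ I ∈ 𝓘, StrictMono (τ I) ∧ τ I 0 = 0) ∧
      ∑ I ∈ 𝓘, Emeasure A I (τ I) = 0) ↔
    (∃ t : Obs → ℕ → ℕ,
      (∀ I ∈ 𝓘, ∀ n, 1 ≤ t I n) ∧
      ∑ I ∈ 𝓘, Etilde A I (t I) = 0) :=
  stmt8_general 𝓘 A
end
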